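/- Let (A,B,R,σ) be a normalized context whose concept lattice M satisfies the ascending chain condition, and let {(A_λ,B_λ)}_{λ∈Λ} be a decomposition of (A,B,R,σ) into independent subcontexts. Then the family {K_λ}_{λ∈Λ}, where K_λ = {⟨g,f⟩∈M : ⟨g,f⟩ = ⋀ M_g^{A_λ}} ∪ {⟨g_⊤,f_⊥⟩, ⟨g_⊥,f_⊤⟩}, is a family of pairwise independent blocks of M whose union is M; that is, M is decomposed into the independent blocks {K_λ}_{λ∈Λ}. -/

import Mathlib

/-- A multi-adjoint frame together with a formal context `(A, B, R, σ)`.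
`conj i`, `limp i`, `rimp i` form an adjoint triple on the complete lattice `L` for each
index `i : I`, and each conjunctor satisfies the boundary condition
`x & ⊤ = ⊤ & x = x`. -/
structure FCAContext (L : Type*) [CompleteLattice L] (I A B : Type*) where
  conj : I → L → L → L
  limp : I → L → L → L
  rimp : I → L → L → L
  R : A → B → L
  sig : A → B → I
  adjoint_left : ∀ i x y z, x ≤ limp i z y ↔ conj i x y ≤ z
  adjoint_right : ∀ i x y z, conj i x y ≤ z ↔ y ≤ rimp i z x
  boundary_left : ∀ i x, conj i ⊤ x = x
  boundary_right : ∀ i x, conj i x ⊤ = x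

namespace FCAContext

variable {L I A B : Type*} [CompleteLattice L]

open Classical in
/-- The fuzzy-attribute `φ_{a,x}`. -/
noncomputable def phiA (a : A) (x : L) : A → L :=
  fun a' => if a' = a then x else ⊥

open Classical in
/-- The fuzzy-object `φ_{b,y}`. -/
noncomputable def phiB (b : B) (y : L) : B → L :=
  fun b' => if b' = b then y else ⊥

/-- The pair `⟨g_⊤, f_⊥⟩` (the top of the concept lattice of a normalized context). -/
def topC : (B → L) × (A → L) := (fun _ => (⊤ : L), fun _ => (⊥ : L))

/-- The pair `⟨g_⊥, f_⊤⟩` (the bottom of the concept lattice of a normalized context). -/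
def botC : (B → L) × (A → L) := (fun _ => (⊥ : L), fun _ => (⊤ : L))

/-- The order on concepts: `⟨g₁,f₁⟩ ⪯ ⟨g₂,f₂⟩ iff g₁ ≤ g₂` pointwise. -/
def cle (c d : (B → L) × (A → L)) : Prop := c.1 ≤ d.1

variable (C : FCAContext L I A B)

/-- The derivation operator `↑` on fuzzy sets of objects:
`g↑(a) = ⨅_b R(a,b) ↙^{σ(a,b)} g(b)`. -/
def up (g : B → L) : A → L := fun a => ⨅ b, C.limp (C.sig a b) (C.R a b) (g b)

/-- The derivation operator `↓` on fuzzy sets of attributes: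
`f↓(b) = ⨅_a R(a,b) ↖_{σ(a,b)} f(a)`. -/
def down (f : A → L) : B → L := fun b => ⨅ a, C.rimp (C.sig a b) (C.R a b) (f a)

/-- The concept lattice `M`: pairs `⟨g, f⟩` with `g↑ = f` and `f↓ = g`. -/
def concepts : Set ((B → L) × (A → L)) :=
  {c | C.up c.1 = c.2 ∧ C.down c.2 = c.1}

/-- The pair `⟨φ_{a,x}↓, φ_{a,x}↓↑⟩` generated by a fuzzy-attribute. -/
noncomputable def attrConcept (a : A) (x : L) : (B → L) × (A → L) :=
  (C.down (phiA a x), C.up (C.down (phiA a x)))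

/-- The pair `⟨φ_{b,y}↑↓, φ_{b,y}↑⟩` generated by a fuzzy-object. -/
noncomputable def objConcept (b : B) (y : L) : (B → L) × (A → L) :=
  (C.down (C.up (phiB b y)), C.up (phiB b y))

/-- A context is *normalized* when every attribute is related to some object with a
non-bottom value and to some object with the bottom value, and symmetrically for
objects. -/
def Normalized : Prop :=
  (∀ a : A, ∃ b : B, C.R a b ≠ ⊥) ∧ (∀ a : A, ∃ b : B, C.R a b = ⊥) ∧
  (∀ b : B, ∃ a : A, C.R a b ≠ ⊥) ∧ (∀ b : B, ∃ a : A, C.R a b = ⊥)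

/-- The conjunctor associated with the index `i` has no zero-divisors. -/
def NoZeroDiv (i : I) : Prop :=
  ∀ x y : L, x ≠ ⊥ → y ≠ ⊥ → C.conj i x y ≠ ⊥

/-- `(Y, X)` is a *separable subcontext* of the context. -/
def SeparableSubcontext (Y : Set A) (X : Set B) : Prop :=
  Y.Nonempty ∧ X.Nonempty ∧ Y ≠ Set.univ ∧ X ≠ Set.univ ∧
  (∃ a ∈ Y, ∃ b ∈ X, C.R a b ≠ ⊥) ∧
  (∀ a ∈ Y, ∀ b ∉ X, C.R a b = ⊥) ∧
  (∀ a ∉ Y, ∀ b ∈ X, C.R a b = ⊥)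

/-- A family `{(Afam l, Bfam l)}_{l : Λ}` is a *decomposition into independent
subcontexts* of the context. -/
def SubcontextDecomposition {Λ : Type*} (Afam : Λ → Set A) (Bfam : Λ → Set B) : Prop :=
  Nonempty Λ ∧
  (∀ l, C.SeparableSubcontext (Afam l) (Bfam l)) ∧
  (∀ l m, l ≠ m → Disjoint (Afam l) (Afam m)) ∧
  (∀ l m, l ≠ m → Disjoint (Bfam l) (Bfam m)) ∧
  (⋃ l, Afam l) = Set.univ ∧ (⋃ l, Bfam l) = Set.univ ∧
  (∀ l, ∀ a ∉ Afam l, ∀ b ∈ Bfam l, C.NoZeroDiv (C.sig a b)) ∧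
  (∀ l, ∀ a ∈ Afam l, ∀ b ∉ Bfam l, C.NoZeroDiv (C.sig a b))

/-- The meet of two concepts in the concept lattice: the extent is the pointwise
infimum of the extents. -/
def cmeet (c d : (B → L) × (A → L)) : (B → L) × (A → L) :=
  (c.1 ⊓ d.1, C.up (c.1 ⊓ d.1))

/-- The join of two concepts in the concept lattice: the intent is the pointwise
infimum of the intents. -/
def cjoin (c d : (B → L) × (A → L)) : (B → L) × (A → L) :=
  (C.down (c.2 ⊓ d.2), c.2 ⊓ d.2)

/-- A concept is *meet-irreducible* in the concept lattice `M` if it is not the top of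
`M` (its extent is not `g_⊤`) and whenever it is the meet of two concepts it equals one
of them. -/
def MeetIrred (m : (B → L) × (A → L)) : Prop :=
  m ∈ C.concepts ∧ m.1 ≠ (fun _ => (⊤ : L)) ∧
  ∀ c d, c ∈ C.concepts → d ∈ C.concepts → m.1 = c.1 ⊓ d.1 → m = c ∨ m = d

/-- `M_F^{A'}`: the meet-irreducible concepts generated by fuzzy-attributes with
attribute in `A'`. -/
noncomputable def MF (A' : Set A) : Set ((B → L) × (A → L)) :=
  {m | C.MeetIrred m ∧ ∃ a ∈ A', ∃ x : L, m = C.attrConcept a x}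

/-- `M_g^{A'}`: the elements of `M_F^{A'}` above the concept with extent `g`. -/
noncomputable def Mg (g : B → L) (A' : Set A) : Set ((B → L) × (A → L)) :=
  {m ∈ C.MF A' | g ≤ m.1}

/-- The concept lattice satisfies the ascending chain condition. -/
def ACC : Prop :=
  ∀ c : ℕ → (B → L) × (A → L), (∀ n, c n ∈ C.concepts) →
    (∀ n, cle (c n) (c (n + 1))) → ∃ n, ∀ m, n ≤ m → c m = c n

/-- `K` is a *block of concepts* of the concept lattice `M`: a sublattice of `M`,
different from `M`, containing some concept other than the top `⟨g_⊤,f_⊥⟩` and the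
bottom `⟨g_⊥,f_⊤⟩`, and closed under comparability except for the top and the bottom. -/
def IsBlockM (K : Set ((B → L) × (A → L))) : Prop :=
  K ⊆ C.concepts ∧ K ≠ C.concepts ∧
  (K \ ({topC, botC} : Set ((B → L) × (A → L)))).Nonempty ∧
  (∀ c ∈ K, ∀ d ∈ K, C.cmeet c d ∈ K ∧ C.cjoin c d ∈ K) ∧
  ∀ k ∈ K \ ({topC, botC} : Set ((B → L) × (A → L))), ∀ c ∈ C.concepts,
    (cle k c ∨ cle c k) →
    c ∉ ({topC, botC} : Set ((B → L) × (A → L))) → c ∈ K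

/-- A complete block of concepts: a block containing the top and the bottom of `M`. -/
def IsCompleteBlockM (K : Set ((B → L) × (A → L))) : Prop :=
  C.IsBlockM K ∧ topC ∈ K ∧ botC ∈ K

/-- A family `{K l}_{l : Λ}` is a *decomposition into independent blocks* of the
concept lattice `M`. -/
def BlockDecomposition {Λ : Type*} (K : Λ → Set ((B → L) × (A → L))) : Prop :=
  Nonempty Λ ∧ (∀ l, C.IsBlockM (K l)) ∧
  (∀ l m, l ≠ m → K l ∩ K m ⊆ ({topC, botC} : Set ((B → L) × (A → L)))) ∧
  (⋃ l, K l) = C.concepts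

/-- The block of concepts `K_λ` determined by a set of attributes `A'`:
the concepts which are the infimum of `M_g^{A'}`, together with the top and the
bottom of `M`. -/
noncomputable def Kblock (A' : Set A) : Set ((B → L) × (A → L)) :=
  {c ∈ C.concepts | c.1 = ⨅ m ∈ C.Mg c.1 A', m.1} ∪
    ({topC, botC} : Set ((B → L) × (A → L)))

/-- The set of attributes `A_μ` associated with a block of concepts `K`. -/
noncomputable def Amu (K : Set ((B → L) × (A → L))) : Set A :=
  {a | ∃ x : L, C.attrConcept a x ∈
    K \ ({topC, botC} : Set ((B → L) × (A → L)))}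

/-- The set of objects `B_μ` associated with a block of concepts `K`. -/
noncomputable def Bmu (K : Set ((B → L) × (A → L))) : Set B :=
  {b | ∃ y : L, C.objConcept b y ∈
    K \ ({topC, botC} : Set ((B → L) × (A → L)))}

end FCAContext
namespace FCAContext

section Aux

variable {L I A B : Type*} [CompleteLattice L] (C : FCAContext L I A B)

lemma conj_bot_right (i : I) (x : L) : C.conj i x ⊥ = ⊥ :=
  le_bot_iff.mp ((C.adjoint_right i x ⊥ ⊥).mpr bot_le)

lemma conj_bot_left (i : I) (y : L) : C.conj i ⊥ y = ⊥ :=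
  le_bot_iff.mp ((C.adjoint_left i ⊥ y ⊥).mp bot_le)

lemma limp_bot_right (i : I) (z : L) : C.limp i z ⊥ = ⊤ :=
  top_unique ((C.adjoint_left i ⊤ ⊥ z).mpr (by rw [C.conj_bot_right]; exact bot_le))

lemma rimp_bot_right (i : I) (z : L) : C.rimp i z ⊥ = ⊤ :=
  top_unique ((C.adjoint_right i ⊥ ⊤ z).mp (by rw [C.conj_bot_left]; exact bot_le))

lemma limp_top (i : I) (z : L) : C.limp i z ⊤ = z :=
  le_antisymm
    (by have := (C.adjoint_left i (C.limp i z ⊤) ⊤ z).mp le_rfl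
        rwa [C.boundary_right] at this)
    ((C.adjoint_left i z ⊤ z).mpr (by rw [C.boundary_right]))

lemma rimp_top (i : I) (z : L) : C.rimp i z ⊤ = z :=
  le_antisymm
    (by have := (C.adjoint_right i ⊤ (C.rimp i z ⊤) z).mpr le_rfl
        rwa [C.boundary_left] at this)
    ((C.adjoint_right i ⊤ z z).mp (by rw [C.boundary_left]))

lemma limp_bot_of_nzd {i : I} (h : C.NoZeroDiv i) {y : L} (hy : y ≠ ⊥) :
    C.limp i ⊥ y = ⊥ := by
  by_contra hne
  exact h _ _ hne hy (le_bot_iff.mp ((C.adjoint_left i _ y ⊥).mp le_rfl))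

lemma rimp_bot_of_nzd {i : I} (h : C.NoZeroDiv i) {x : L} (hx : x ≠ ⊥) :
    C.rimp i ⊥ x = ⊥ := by
  by_contra hne
  exact h _ _ hx hne (le_bot_iff.mp ((C.adjoint_right i x _ ⊥).mpr le_rfl))

lemma gc (f : A → L) (g : B → L) : g ≤ C.down f ↔ f ≤ C.up g := by
  constructor
  · intro h a
    refine le_iInf fun b => (C.adjoint_left _ _ _ _).mpr ?_
    exact (C.adjoint_right _ _ _ _).mpr ((h b).trans (iInf_le _ a))
  · intro h b
    refine le_iInf fun a => ?_
    exact (C.adjoint_right _ _ _ _).mp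
      ((C.adjoint_left _ _ _ _).mp ((h a).trans (iInf_le _ b)))

lemma le_down_up (g : B → L) : g ≤ C.down (C.up g) := (C.gc _ g).mpr le_rfl

lemma le_up_down (f : A → L) : f ≤ C.up (C.down f) := (C.gc f _).mp le_rfl

lemma up_antitone {g₁ g₂ : B → L} (h : g₁ ≤ g₂) : C.up g₂ ≤ C.up g₁ :=
  (C.gc _ _).mp (h.trans (C.le_down_up g₂))

lemma down_antitone {f₁ f₂ : A → L} (h : f₁ ≤ f₂) : C.down f₂ ≤ C.down f₁ :=
  (C.gc _ _).mpr (h.trans (C.le_up_down f₂))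

lemma down_up_down (f : A → L) : C.down (C.up (C.down f)) = C.down f :=
  le_antisymm (C.down_antitone (C.le_up_down f)) (C.le_down_up _)

lemma up_down_up (g : B → L) : C.up (C.down (C.up g)) = C.up g :=
  le_antisymm (C.up_antitone (C.le_down_up g)) (C.le_up_down _)

lemma attrConcept_mem (a : A) (x : L) : C.attrConcept a x ∈ C.concepts :=
  ⟨rfl, C.down_up_down _⟩

lemma down_phiA (a : A) (x : L) (b : B) :
    C.down (phiA a x) b = C.rimp (C.sig a b) (C.R a b) x := by
  classical
  refine le_antisymm ?_ (le_iInf fun a' => ?_)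
  · refine (iInf_le _ a).trans ?_
    simp [phiA]
  · by_cases h : a' = a
    · subst h; simp [phiA]
    · simp [phiA, h, C.rimp_bot_right, le_top]

lemma down_bot : C.down (fun _ => (⊥ : L)) = fun _ => (⊤ : L) :=
  funext fun b => top_unique (le_iInf fun a => by simp [C.rimp_bot_right])

lemma up_bot : C.up (fun _ => (⊥ : L)) = fun _ => (⊤ : L) :=
  funext fun a => top_unique (le_iInf fun b => by simp [C.limp_bot_right])

lemma down_top_of (hn4 : ∀ b : B, ∃ a : A, C.R a b = ⊥) :
    C.down (fun _ => (⊤ : L)) = fun _ => (⊥ : L) := by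
  funext b
  obtain ⟨a, ha⟩ := hn4 b
  refine le_bot_iff.mp ((iInf_le _ a).trans ?_)
  simp [C.rimp_top, ha]

lemma up_top_of (hn2 : ∀ a : A, ∃ b : B, C.R a b = ⊥) :
    C.up (fun _ => (⊤ : L)) = fun _ => (⊥ : L) := by
  funext a
  obtain ⟨b, hb⟩ := hn2 a
  refine le_bot_iff.mp ((iInf_le _ b).trans ?_)
  simp [C.limp_top, hb]

lemma topC_mem (hn2 : ∀ a : A, ∃ b : B, C.R a b = ⊥) : topC ∈ C.concepts :=
  ⟨C.up_top_of hn2, C.down_bot⟩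

lemma botC_mem (hn4 : ∀ b : B, ∃ a : A, C.R a b = ⊥) : botC ∈ C.concepts :=
  ⟨C.up_bot, C.down_top_of hn4⟩

lemma eq_of_fst_eq {c d : (B → L) × (A → L)} (hc : c ∈ C.concepts)
    (hd : d ∈ C.concepts) (h : c.1 = d.1) : c = d :=
  Prod.ext h (by rw [← hc.1, ← hd.1, h])

lemma eq_botC_of {c : (B → L) × (A → L)} (hc : c ∈ C.concepts)
    (h : c.1 = fun _ => ⊥) : c = botC :=
  Prod.ext h (by rw [← hc.1, h]; exact C.up_bot)

lemma eq_topC_of (hn2 : ∀ a : A, ∃ b : B, C.R a b = ⊥) {c : (B → L) × (A → L)}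
    (hc : c ∈ C.concepts) (h : c.1 = fun _ => ⊤) : c = topC :=
  Prod.ext h (by rw [← hc.1, h]; exact C.up_top_of hn2)

end Aux

end FCAContext
namespace FCAContext

section Aux2

variable {L I A B : Type*} [CompleteLattice L] (C : FCAContext L I A B)

lemma down_up_inf {g₁ g₂ : B → L} (h₁ : C.down (C.up g₁) = g₁)
    (h₂ : C.down (C.up g₂) = g₂) : C.down (C.up (g₁ ⊓ g₂)) = g₁ ⊓ g₂ := by
  refine le_antisymm (le_inf ?_ ?_) (C.le_down_up _)
  · exact (C.down_antitone (C.up_antitone inf_le_left)).trans h₁.le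
  · exact (C.down_antitone (C.up_antitone inf_le_right)).trans h₂.le

lemma up_down_inf {f₁ f₂ : A → L} (h₁ : C.up (C.down f₁) = f₁)
    (h₂ : C.up (C.down f₂) = f₂) : C.up (C.down (f₁ ⊓ f₂)) = f₁ ⊓ f₂ := by
  refine le_antisymm (le_inf ?_ ?_) (C.le_up_down _)
  · exact (C.up_antitone (C.down_antitone inf_le_left)).trans h₁.le
  · exact (C.up_antitone (C.down_antitone inf_le_right)).trans h₂.le

lemma cmeet_mem {c d : (B → L) × (A → L)} (hc : c ∈ C.concepts)
    (hd : d ∈ C.concepts) : C.cmeet c d ∈ C.concepts := by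
  refine ⟨rfl, ?_⟩
  exact C.down_up_inf (by rw [hc.1, hc.2]) (by rw [hd.1, hd.2])

lemma cjoin_mem {c d : (B → L) × (A → L)} (hc : c ∈ C.concepts)
    (hd : d ∈ C.concepts) : C.cjoin c d ∈ C.concepts := by
  refine ⟨?_, rfl⟩
  exact C.up_down_inf (by rw [hc.2, hc.1]) (by rw [hd.2, hd.1])

/-- A structure wrapping the concepts, used for well-founded induction. -/
structure Concepts where
  val : (B → L) × (A → L)
  prop : val ∈ C.concepts

instance : PartialOrder C.Concepts where
  le c d := c.val.1 ≤ d.val.1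
  le_refl c := le_refl c.val.1
  le_trans a b c h h' := @le_trans (B → L) _ a.val.1 b.val.1 c.val.1 h h'
  le_antisymm a b h h' := by
    cases a; cases b
    simp only [Concepts.mk.injEq]
    exact C.eq_of_fst_eq ‹_› ‹_› (le_antisymm h h')

lemma concepts_lt {c d : C.Concepts} (hle : c.val.1 ≤ d.val.1)
    (hne : c.val ≠ d.val) : c < d := by
  refine lt_of_le_of_ne hle (fun h => hne ?_)
  cases h; rfl

lemma wf_gt (hacc : C.ACC) :
    WellFounded ((· > ·) : C.Concepts → C.Concepts → Prop) := by
  refine IsWellFounded.wf (self := (wellFoundedGT_iff_monotone_chain_condition (α := C.Concepts)).mpr ?_)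
  intro a
  obtain ⟨n, hstab⟩ := hacc (fun k => (a k).val) (fun k => (a k).prop)
    (fun k => a.mono (Nat.le_succ k))
  refine ⟨n, fun m hm => ?_⟩
  have := (hstab m hm).symm
  cases hnm : a n; cases hm2 : a m
  rw [hnm, hm2] at this
  simp only [Concepts.mk.injEq]
  exact this

/-- The set of meet-irreducible attribute concepts above a given extent. -/
def MIset (g : B → L) : Set ((B → L) × (A → L)) :=
  {m | C.MeetIrred m ∧ (∃ a x, m = C.attrConcept a x) ∧ g ≤ m.1}

lemma MIset_antitone {g₁ g₂ : B → L} (h : g₁ ≤ g₂) : C.MIset g₂ ⊆ C.MIset g₁ :=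
  fun m hm => ⟨hm.1, hm.2.1, h.trans hm.2.2⟩

lemma extent_le_attr {c : (B → L) × (A → L)} (hc : c ∈ C.concepts) (a : A) :
    c.1 ≤ (C.attrConcept a (c.2 a)).1 := by
  classical
  rw [← hc.2]
  refine C.down_antitone ?_
  intro a'
  simp only [phiA]
  split
  · next h => subst h; exact le_rfl
  · exact bot_le

lemma down_eq_iInf_attr {c : (B → L) × (A → L)} (hc : c ∈ C.concepts) :
    ⨅ a, (C.attrConcept a (c.2 a)).1 = c.1 := by
  funext b
  rw [iInf_apply]
  have : ∀ a : A, (C.attrConcept a (c.2 a)).1 b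
      = C.rimp (C.sig a b) (C.R a b) (c.2 a) := fun a => C.down_phiA a (c.2 a) b
  simp only [this]
  rw [← hc.2]
  rfl

/-- Main structural lemma: every extent is the infimum of the extents of the
meet-irreducible attribute concepts above it. -/
lemma extent_eq_iInf_MI (hacc : C.ACC) {c : (B → L) × (A → L)}
    (hc : c ∈ C.concepts) :
    c.1 = ⨅ m ∈ C.MIset c.1, m.1 := by
  classical
  suffices h : ∀ z : C.Concepts, z.val.1 = ⨅ m ∈ C.MIset z.val.1, m.1 from h ⟨c, hc⟩
  intro z
  induction z using WellFounded.induction (C.wf_gt hacc) with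
  | _ z IH =>
  obtain ⟨c, hc⟩ := z
  simp only at IH ⊢
  refine le_antisymm (le_iInf₂ fun m hm => hm.2.2) ?_
  by_cases hT : c.1 = fun _ => (⊤ : L)
  · rw [hT]; exact le_top
  by_cases hMI : C.MeetIrred c
  · by_cases hAF : ∃ a x, c = C.attrConcept a x
    · exact iInf₂_le c ⟨hMI, hAF, le_rfl⟩
    · -- c is the inf of attribute concepts strictly above it
      have hEne : ∀ a : A, C.attrConcept a (c.2 a) ≠ c := by
        intro a h
        exact hAF ⟨a, c.2 a, h.symm⟩
      have key : ∀ a : A, (⨅ m ∈ C.MIset c.1, m.1) ≤ (C.attrConcept a (c.2 a)).1 := by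
        intro a
        have hlt : (⟨c, hc⟩ : C.Concepts) <
            ⟨C.attrConcept a (c.2 a), C.attrConcept_mem a (c.2 a)⟩ :=
          C.concepts_lt (C.extent_le_attr hc a) (fun h => hEne a h.symm)
        have hIH : (C.attrConcept a (c.2 a)).1
            = ⨅ m ∈ C.MIset (C.attrConcept a (c.2 a)).1, m.1 := IH _ hlt
        calc (⨅ m ∈ C.MIset c.1, m.1)
            ≤ ⨅ m ∈ C.MIset (C.attrConcept a (c.2 a)).1, m.1 :=
              iInf_le_iInf_of_subset (C.MIset_antitone (C.extent_le_attr hc a))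
          _ = (C.attrConcept a (c.2 a)).1 := (hIH).symm
      calc (⨅ m ∈ C.MIset c.1, m.1) ≤ ⨅ a, (C.attrConcept a (c.2 a)).1 :=
            le_iInf key
        _ = c.1 := C.down_eq_iInf_attr hc
  · -- c is not meet-irreducible
    have : ¬ (∀ c' d', c' ∈ C.concepts → d' ∈ C.concepts →
        c.1 = c'.1 ⊓ d'.1 → c = c' ∨ c = d') := by
      intro hall
      exact hMI ⟨hc, hT, hall⟩
    push_neg at this
    obtain ⟨d₁, d₂, hd₁, hd₂, heq, hne₁, hne₂⟩ := this
    have hle₁ : c.1 ≤ d₁.1 := heq.le.trans inf_le_left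
    have hle₂ : c.1 ≤ d₂.1 := heq.le.trans inf_le_right
    have hlt₁ : (⟨c, hc⟩ : C.Concepts) < ⟨d₁, hd₁⟩ := C.concepts_lt hle₁ hne₁
    have hlt₂ : (⟨c, hc⟩ : C.Concepts) < ⟨d₂, hd₂⟩ := C.concepts_lt hle₂ hne₂
    have h₁ : d₁.1 = ⨅ m ∈ C.MIset d₁.1, m.1 := IH _ hlt₁
    have h₂ : d₂.1 = ⨅ m ∈ C.MIset d₂.1, m.1 := IH _ hlt₂
    calc (⨅ m ∈ C.MIset c.1, m.1) ≤ d₁.1 ⊓ d₂.1 :=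
          le_inf ((iInf_le_iInf_of_subset (C.MIset_antitone hle₁)).trans h₁.ge)
            ((iInf_le_iInf_of_subset (C.MIset_antitone hle₂)).trans h₂.ge)
      _ = c.1 := heq.symm

end Aux2

end FCAContext
namespace FCAContext

section Aux3

variable {L I A B : Type*} [CompleteLattice L] (C : FCAContext L I A B)
variable {Λ : Type*} {Afam : Λ → Set A} {Bfam : Λ → Set B}

lemma attr_rep (hdec : C.SubcontextDecomposition Afam Bfam) {l : Λ} {b₀ : B}
    (hb₀ : b₀ ∈ Bfam l) {g : B → L} (hg : g b₀ ≠ ⊥) {m : (B → L) × (A → L)}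
    (hm : m ∈ C.MIset g) :
    (∃ a ∈ Afam l, ∃ x, m = C.attrConcept a x) ∧ ∀ b ∉ Bfam l, m.1 b = ⊥ := by
  classical
  obtain ⟨hΛ, hsep, hAdisj, hBdisj, hAcov, hBcov, hnzd1, hnzd2⟩ := hdec
  obtain ⟨hMI, ⟨a, x, rfl⟩, hle⟩ := hm
  have hx : x ≠ ⊥ := by
    intro hx
    subst hx
    refine hMI.2.1 ?_
    have hphi : phiA a (⊥ : L) = fun _ => (⊥ : L) := by
      funext a'; simp [phiA]
    show C.down (phiA a ⊥) = fun _ => ⊤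
    rw [hphi, C.down_bot]
  have hmem : a ∈ Afam l := by
    by_contra ha
    have hRb : C.R a b₀ = ⊥ := (hsep l).2.2.2.2.2.2 a ha b₀ hb₀
    have : (C.attrConcept a x).1 b₀ = ⊥ := by
      show C.down (phiA a x) b₀ = ⊥
      rw [C.down_phiA, hRb, C.rimp_bot_of_nzd (hnzd1 l a ha b₀ hb₀) hx]
    exact hg (le_bot_iff.mp (this ▸ hle b₀))
  refine ⟨⟨a, hmem, x, rfl⟩, fun b hb => ?_⟩
  have hRb : C.R a b = ⊥ := (hsep l).2.2.2.2.2.1 a hmem b hb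
  show C.down (phiA a x) b = ⊥
  rw [C.down_phiA, hRb, C.rimp_bot_of_nzd (hnzd2 l a hmem b hb) hx]

lemma Mg_supported (hdec : C.SubcontextDecomposition Afam Bfam) {l : Λ}
    {g : B → L} {m : (B → L) × (A → L)} (hm : m ∈ C.Mg g (Afam l)) :
    ∀ b ∉ Bfam l, m.1 b = ⊥ := by
  classical
  obtain ⟨hΛ, hsep, hAdisj, hBdisj, hAcov, hBcov, hnzd1, hnzd2⟩ := hdec
  obtain ⟨⟨hMI, a, ha, x, rfl⟩, hle⟩ := hm
  have hx : x ≠ ⊥ := by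
    intro hx
    subst hx
    refine hMI.2.1 ?_
    have hphi : phiA a (⊥ : L) = fun _ => (⊥ : L) := by
      funext a'; simp [phiA]
    show C.down (phiA a ⊥) = fun _ => ⊤
    rw [hphi, C.down_bot]
  intro b hb
  have hRb : C.R a b = ⊥ := (hsep l).2.2.2.2.2.1 a ha b hb
  show C.down (phiA a x) b = ⊥
  rw [C.down_phiA, hRb, C.rimp_bot_of_nzd (hnzd2 l a ha b hb) hx]

lemma mem_Kblock_of_supported (hacc : C.ACC)
    (hdec : C.SubcontextDecomposition Afam Bfam) {l : Λ}
    {c : (B → L) × (A → L)} (hc : c ∈ C.concepts)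
    (hsupp : ∀ b ∉ Bfam l, c.1 b = ⊥) (hnb : c.1 ≠ fun _ => ⊥) :
    c ∈ C.Kblock (Afam l) := by
  classical
  have hb₀ : ∃ b₀, c.1 b₀ ≠ ⊥ := by
    by_contra h
    push_neg at h
    exact hnb (funext h)
  obtain ⟨b₀, h0⟩ := hb₀
  have hb₀l : b₀ ∈ Bfam l := by
    by_contra h
    exact h0 (hsupp b₀ h)
  have hseteq : C.Mg c.1 (Afam l) = C.MIset c.1 := by
    ext m
    constructor
    · rintro ⟨⟨hMI, a, _, x, hx⟩, hle⟩
      exact ⟨hMI, ⟨a, x, hx⟩, hle⟩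
    · intro hm
      exact ⟨⟨hm.1, (C.attr_rep hdec hb₀l h0 hm).1⟩, hm.2.2⟩
  exact Or.inl ⟨hc, by rw [hseteq]; exact C.extent_eq_iInf_MI hacc hc⟩

lemma Kblock_supported (hn2 : ∀ a : A, ∃ b : B, C.R a b = ⊥)
    (hdec : C.SubcontextDecomposition Afam Bfam) {l : Λ}
    {c : (B → L) × (A → L)} (hc : c ∈ C.Kblock (Afam l)) (ht : c ≠ topC)
    (hb : c ≠ botC) : c ∈ C.concepts ∧ ∀ b ∉ Bfam l, c.1 b = ⊥ := by
  rcases hc with ⟨hcc, heq⟩ | hc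
  · refine ⟨hcc, fun b hbl => ?_⟩
    have hne : (C.Mg c.1 (Afam l)).Nonempty := by
      by_contra h
      rw [Set.not_nonempty_iff_eq_empty] at h
      rw [h] at heq
      simp only [Set.mem_empty_iff_false, iInf_false, iInf_top] at heq
      exact ht (C.eq_topC_of hn2 hcc heq)
    obtain ⟨m₀, hm₀⟩ := hne
    have hle : c.1 ≤ m₀.1 := heq.le.trans (iInf₂_le m₀ hm₀)
    exact le_bot_iff.mp ((hle b).trans (C.Mg_supported hdec hm₀ b hbl).le)
  · rcases hc with h | h
    · exact absurd h ht
    · exact absurd h hb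

lemma eq_topC_of_two (hdec : C.SubcontextDecomposition Afam Bfam)
    {c : (B → L) × (A → L)} (hc : c ∈ C.concepts) {l₁ l₂ : Λ} {b₁ b₂ : B}
    (h12 : l₁ ≠ l₂) (hb₁ : b₁ ∈ Bfam l₁) (hb₂ : b₂ ∈ Bfam l₂)
    (h1 : c.1 b₁ ≠ ⊥) (h2 : c.1 b₂ ≠ ⊥) : c = topC := by
  classical
  obtain ⟨hΛ, hsep, hAdisj, hBdisj, hAcov, hBcov, hnzd1, hnzd2⟩ := hdec
  have hsnd : c.2 = fun _ => (⊥ : L) := by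
    funext a
    have ha : ∃ k, a ∈ Afam k := by
      have := hAcov ▸ Set.mem_univ a
      exact Set.mem_iUnion.mp this
    obtain ⟨k, hk⟩ := ha
    have key : ∀ l' b', l' ≠ k → b' ∈ Bfam l' → c.1 b' ≠ ⊥ → c.2 a = ⊥ := by
      intro l' b' hlk hb' hcb'
      have hal' : a ∉ Afam l' := fun h =>
        Set.disjoint_left.mp (hAdisj l' k hlk) h hk
      have hRb : C.R a b' = ⊥ := (hsep l').2.2.2.2.2.2 a hal' b' hb'
      have hle : c.2 a ≤ C.limp (C.sig a b') (C.R a b') (c.1 b') := by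
        rw [← hc.1]
        exact iInf_le _ b'
      rw [hRb, C.limp_bot_of_nzd (hnzd1 l' a hal' b' hb') hcb'] at hle
      exact le_bot_iff.mp hle
    by_cases hkl : k = l₁
    · exact key l₂ b₂ (fun h => h12 (h.trans hkl).symm) hb₂ h2
    · exact key l₁ b₁ (fun h => hkl h.symm) hb₁ h1
  have hfst : c.1 = fun _ => (⊤ : L) := by
    rw [← hc.2, hsnd, C.down_bot]
  exact Prod.ext hfst hsnd

lemma support_unique (hdec : C.SubcontextDecomposition Afam Bfam)
    {c : (B → L) × (A → L)} (hc : c ∈ C.concepts) (ht : c ≠ topC) {l : Λ}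
    {b₀ : B} (hb₀ : b₀ ∈ Bfam l) (h0 : c.1 b₀ ≠ ⊥) :
    ∀ b ∉ Bfam l, c.1 b = ⊥ := by
  intro b hb
  by_contra hcb
  have hbk : ∃ k, b ∈ Bfam k := by
    have := hdec.2.2.2.2.2.1 ▸ Set.mem_univ b
    exact Set.mem_iUnion.mp this
  obtain ⟨k, hk⟩ := hbk
  have hkl : l ≠ k := fun h => hb (h ▸ hk)
  exact ht (C.eq_topC_of_two hdec hc hkl hb₀ hk h0 hcb)

lemma exists_nontrivial (hn : C.Normalized) (hacc : C.ACC)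
    (hdec : C.SubcontextDecomposition Afam Bfam) (l : Λ) :
    ∃ c, c ∈ C.Kblock (Afam l) ∧ c ∈ C.concepts ∧ c ≠ topC ∧ c ≠ botC ∧
      (∀ b ∉ Bfam l, c.1 b = ⊥) ∧ ∃ b ∈ Bfam l, c.1 b ≠ ⊥ := by
  classical
  obtain ⟨a₁, ha₁, b₁, hb₁, hR⟩ := (hdec.2.1 l).2.2.2.2.1
  set c := C.attrConcept a₁ (⊤ : L) with hcdef
  have hcc : c ∈ C.concepts := C.attrConcept_mem a₁ ⊤
  have hval : ∀ b, c.1 b = C.R a₁ b := by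
    intro b
    show C.down (phiA a₁ ⊤) b = C.R a₁ b
    rw [C.down_phiA, C.rimp_top]
  have hnbot : c ≠ botC := by
    intro h
    have : c.1 b₁ = ⊥ := by rw [h]; rfl
    exact hR ((hval b₁) ▸ this)
  have hntop : c ≠ topC := by
    intro h
    obtain ⟨b₂, hb₂⟩ := hn.2.1 a₁
    have h1 : c.1 b₂ = ⊤ := by rw [h]; rfl
    have h2 : c.1 b₂ = ⊥ := (hval b₂).trans hb₂
    have hbt : (⊥ : L) = ⊤ := h2 ▸ h1
    exact hR (le_bot_iff.mp (hbt ▸ (le_top (a := C.R a₁ b₁))))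
  have hsupp : ∀ b ∉ Bfam l, c.1 b = ⊥ := by
    intro b hb
    rw [hval b]
    exact (hdec.2.1 l).2.2.2.2.2.1 a₁ ha₁ b hb
  have hnb : c.1 ≠ fun _ => (⊥ : L) := by
    intro h
    exact hR (by rw [← hval b₁, h])
  exact ⟨c, C.mem_Kblock_of_supported hacc hdec hcc hsupp hnb, hcc, hntop, hnbot,
    hsupp, ⟨b₁, hb₁, by rw [hval b₁]; exact hR⟩⟩

end Aux3

end FCAContext


/-- Let `(A,B,R,σ)` be a normalized context whose concept lattice
satisfies the ascending chain condition, with a decomposition into independent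
subcontexts `{(Afam l, Bfam l)}`. Then the family of sets
`K_l = {⟨g,f⟩ ∈ M : ⟨g,f⟩ = ⋀ M_g^{Afam l}} ∪ {⟨g_⊤,f_⊥⟩, ⟨g_⊥,f_⊤⟩}` is a family of
pairwise independent blocks whose union is the concept lattice, i.e. a decomposition of
the concept lattice into independent blocks. -/
theorem FCAContext.Kblock_family_is_block_decomposition
    {L I A B : Type*} [CompleteLattice L] [Finite I] [Nonempty I]
    [Nonempty A] [Nonempty B] (C : FCAContext L I A B)
    (hn : C.Normalized) (hacc : C.ACC)
    {Λ : Type*} (Afam : Λ → Set A) (Bfam : Λ → Set B)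
    (hdec : C.SubcontextDecomposition Afam Bfam) :
    C.BlockDecomposition (fun l => C.Kblock (Afam l)) := by
  classical
  obtain ⟨hn1, hn2, hn3, hn4⟩ := hn
  have hΛ : Nonempty Λ := hdec.1
  have hsep := hdec.2.1
  have hAdisj := hdec.2.2.1
  have hBdisj := hdec.2.2.2.1
  have hAcov := hdec.2.2.2.2.1
  have hBcov := hdec.2.2.2.2.2.1
  have hnzd1 := hdec.2.2.2.2.2.2.1
  have hnzd2 := hdec.2.2.2.2.2.2.2
  have htopK : ∀ l, topC ∈ C.Kblock (Afam l) := fun l =>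
    Or.inr (Set.mem_insert _ _)
  have hbotK : ∀ l, botC ∈ C.Kblock (Afam l) := fun l =>
    Or.inr (Set.mem_insert_of_mem _ rfl)
  have hKsub : ∀ l, C.Kblock (Afam l) ⊆ C.concepts := by
    intro l c hc
    rcases hc with ⟨hc, _⟩ | hc
    · exact hc
    · rcases hc with h | h
      · exact h ▸ C.topC_mem hn2
      · exact h ▸ C.botC_mem hn4
  -- any nontrivial concept belongs to the block of its support
  have hconc_mem : ∀ c ∈ C.concepts, c ≠ topC → c ≠ botC →
      ∃ l, (∀ b ∉ Bfam l, c.1 b = ⊥) ∧ c ∈ C.Kblock (Afam l) := by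
    intro c hc hct hcb
    have hnb : c.1 ≠ fun _ => (⊥ : L) := fun h => hcb (C.eq_botC_of hc h)
    have hb₀ : ∃ b₀, c.1 b₀ ≠ ⊥ := by
      by_contra h
      push_neg at h
      exact hnb (funext h)
    obtain ⟨b₀, h0⟩ := hb₀
    have hbl : ∃ l, b₀ ∈ Bfam l :=
      Set.mem_iUnion.mp (hBcov ▸ Set.mem_univ b₀)
    obtain ⟨l, hl⟩ := hbl
    have hsupp := C.support_unique hdec hc hct hl h0
    exact ⟨l, hsupp, C.mem_Kblock_of_supported hacc hdec hc hsupp hnb⟩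
  refine ⟨hΛ, ?_, ?_, ?_⟩
  · -- each Kblock is a block
    intro l
    refine ⟨hKsub l, ?_, ?_, ?_, ?_⟩
    · -- Kblock ≠ concepts
      obtain ⟨a₀, ha₀⟩ := Set.ne_univ_iff_exists_notMem _ |>.mp (hsep l).2.2.1
      have : ∃ l', a₀ ∈ Afam l' := Set.mem_iUnion.mp (hAcov ▸ Set.mem_univ a₀)
      obtain ⟨l', hl'⟩ := this
      have hll' : l ≠ l' := fun h => ha₀ (h ▸ hl')
      obtain ⟨c', hcK', hcc', hct', hcb', _, b', hb', hcb0⟩ :=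
        C.exists_nontrivial ⟨hn1, hn2, hn3, hn4⟩ hacc hdec l'
      have hnotin : c' ∉ C.Kblock (Afam l) := by
        intro hmem
        have hsupp := (C.Kblock_supported hn2 hdec hmem hct' hcb').2
        have hb'l : b' ∉ Bfam l := fun h =>
          Set.disjoint_left.mp (hBdisj l l' hll') h hb'
        exact hcb0 (hsupp b' hb'l)
      intro heq
      have heq' : C.Kblock (Afam l) = C.concepts := heq
      rw [← heq'] at hcc'
      exact hnotin hcc'
    · -- nontrivial element
      obtain ⟨c', hcK', _, hct', hcb', _, _⟩ :=
        C.exists_nontrivial ⟨hn1, hn2, hn3, hn4⟩ hacc hdec l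
      refine ⟨c', hcK', ?_⟩
      intro h
      rcases h with h | h
      · exact hct' h
      · exact hcb' h
    · -- closure under meets and joins
      intro c hc d hd
      have hcc : c ∈ C.concepts := hKsub l hc
      have hdc : d ∈ C.concepts := hKsub l hd
      constructor
      · -- cmeet
        by_cases hct : c = topC
        · subst hct
          have h1 : (topC : (B → L) × (A → L)).1 ⊓ d.1 = d.1 := by
            funext b; simp [topC]
          have : C.cmeet topC d = d := by
            show ((topC : (B → L) × (A → L)).1 ⊓ d.1,
              C.up ((topC : (B → L) × (A → L)).1 ⊓ d.1)) = d
            rw [h1]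
            exact Prod.ext rfl hdc.1
          rw [this]; exact hd
        by_cases hdt : d = topC
        · subst hdt
          have h1 : c.1 ⊓ (topC : (B → L) × (A → L)).1 = c.1 := by
            funext b; simp [topC]
          have : C.cmeet c topC = c := by
            show (c.1 ⊓ (topC : (B → L) × (A → L)).1,
              C.up (c.1 ⊓ (topC : (B → L) × (A → L)).1)) = c
            rw [h1]
            exact Prod.ext rfl hcc.1
          rw [this]; exact hc
        by_cases hcb : c = botC
        · subst hcb
          have h1 : (botC : (B → L) × (A → L)).1 ⊓ d.1 = fun _ => (⊥ : L) := by
            funext b; simp [botC]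
          have : C.cmeet botC d = botC := by
            show ((botC : (B → L) × (A → L)).1 ⊓ d.1,
              C.up ((botC : (B → L) × (A → L)).1 ⊓ d.1)) = botC
            rw [h1]
            exact Prod.ext rfl C.up_bot
          rw [this]; exact hbotK l
        by_cases hdb : d = botC
        · subst hdb
          have h1 : c.1 ⊓ (botC : (B → L) × (A → L)).1 = fun _ => (⊥ : L) := by
            funext b; simp [botC]
          have : C.cmeet c botC = botC := by
            show (c.1 ⊓ (botC : (B → L) × (A → L)).1,
              C.up (c.1 ⊓ (botC : (B → L) × (A → L)).1)) = botC
            rw [h1]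
            exact Prod.ext rfl C.up_bot
          rw [this]; exact hbotK l
        -- both nontrivial
        have hcs := C.Kblock_supported hn2 hdec hc hct hcb
        have hds := C.Kblock_supported hn2 hdec hd hdt hdb
        have hmc : C.cmeet c d ∈ C.concepts := C.cmeet_mem hcc hdc
        by_cases hmt : C.cmeet c d = topC
        · rw [hmt]; exact htopK l
        by_cases hmb : C.cmeet c d = botC
        · rw [hmb]; exact hbotK l
        have hsupp : ∀ b ∉ Bfam l, (C.cmeet c d).1 b = ⊥ := by
          intro b hb
          show (c.1 ⊓ d.1) b = ⊥
          rw [Pi.inf_apply, hcs.2 b hb, bot_inf_eq]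
        have hnb : (C.cmeet c d).1 ≠ fun _ => (⊥ : L) := fun h =>
          hmb (C.eq_botC_of hmc h)
        exact C.mem_Kblock_of_supported hacc hdec hmc hsupp hnb
      · -- cjoin
        by_cases hct : c = topC
        · subst hct
          have h1 : (topC : (B → L) × (A → L)).2 ⊓ d.2 = fun _ => (⊥ : L) := by
            funext a; simp [topC]
          have : C.cjoin topC d = topC := by
            show (C.down ((topC : (B → L) × (A → L)).2 ⊓ d.2),
              (topC : (B → L) × (A → L)).2 ⊓ d.2) = topC
            rw [h1, C.down_bot]
            rfl
          rw [this]; exact htopK l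
        by_cases hdt : d = topC
        · subst hdt
          have h1 : c.2 ⊓ (topC : (B → L) × (A → L)).2 = fun _ => (⊥ : L) := by
            funext a; simp [topC]
          have : C.cjoin c topC = topC := by
            show (C.down (c.2 ⊓ (topC : (B → L) × (A → L)).2),
              c.2 ⊓ (topC : (B → L) × (A → L)).2) = topC
            rw [h1, C.down_bot]
            rfl
          rw [this]; exact htopK l
        by_cases hcb : c = botC
        · subst hcb
          have h1 : (botC : (B → L) × (A → L)).2 ⊓ d.2 = d.2 := by
            funext a; simp [botC]
          have : C.cjoin botC d = d := by
            show (C.down ((botC : (B → L) × (A → L)).2 ⊓ d.2),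
              (botC : (B → L) × (A → L)).2 ⊓ d.2) = d
            rw [h1]
            exact Prod.ext hdc.2 rfl
          rw [this]; exact hd
        by_cases hdb : d = botC
        · subst hdb
          have h1 : c.2 ⊓ (botC : (B → L) × (A → L)).2 = c.2 := by
            funext a; simp [botC]
          have : C.cjoin c botC = c := by
            show (C.down (c.2 ⊓ (botC : (B → L) × (A → L)).2),
              c.2 ⊓ (botC : (B → L) × (A → L)).2) = c
            rw [h1]
            exact Prod.ext hcc.2 rfl
          rw [this]; exact hc
        -- both nontrivial
        have hcs := C.Kblock_supported hn2 hdec hc hct hcb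
        have hds := C.Kblock_supported hn2 hdec hd hdt hdb
        have hjc : C.cjoin c d ∈ C.concepts := C.cjoin_mem hcc hdc
        by_cases hjt : C.cjoin c d = topC
        · rw [hjt]; exact htopK l
        by_cases hjb : C.cjoin c d = botC
        · rw [hjb]; exact hbotK l
        -- find a₀ ∈ Afam l with (c.2 ⊓ d.2) a₀ ≠ ⊥
        have hFne : c.2 ⊓ d.2 ≠ fun _ => (⊥ : L) := by
          intro h
          refine hjt ?_
          show (C.down (c.2 ⊓ d.2), c.2 ⊓ d.2) = topC
          rw [h, C.down_bot]
          rfl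
        have ha₀ : ∃ a₀, (c.2 ⊓ d.2) a₀ ≠ ⊥ := by
          by_contra h
          push_neg at h
          exact hFne (funext h)
        obtain ⟨a₀, hFa₀⟩ := ha₀
        have hca₀ : c.2 a₀ ≠ ⊥ := by
          intro h
          refine hFa₀ ?_
          rw [Pi.inf_apply, h, bot_inf_eq]
        have ha₀l : a₀ ∈ Afam l := by
          by_contra ha₀l
          have hcnb : c.1 ≠ fun _ => (⊥ : L) := fun h => hcb (C.eq_botC_of hcc h)
          have hb₀ : ∃ b₀, c.1 b₀ ≠ ⊥ := by
            by_contra h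
            push_neg at h
            exact hcnb (funext h)
          obtain ⟨b₀, h0⟩ := hb₀
          have hb₀l : b₀ ∈ Bfam l := by
            by_contra h
            exact h0 (hcs.2 b₀ h)
          have hRb : C.R a₀ b₀ = ⊥ := (hsep l).2.2.2.2.2.2 a₀ ha₀l b₀ hb₀l
          have hle : c.2 a₀ ≤ C.limp (C.sig a₀ b₀) (C.R a₀ b₀) (c.1 b₀) := by
            rw [← hcc.1]
            exact iInf_le _ b₀
          rw [hRb, C.limp_bot_of_nzd (hnzd1 l a₀ ha₀l b₀ hb₀l) h0] at hle
          exact hca₀ (le_bot_iff.mp hle)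
        have hsupp : ∀ b ∉ Bfam l, (C.cjoin c d).1 b = ⊥ := by
          intro b hb
          have hRb : C.R a₀ b = ⊥ := (hsep l).2.2.2.2.2.1 a₀ ha₀l b hb
          have hle : (C.cjoin c d).1 b ≤
              C.rimp (C.sig a₀ b) (C.R a₀ b) ((c.2 ⊓ d.2) a₀) := iInf_le _ a₀
          rw [hRb, C.rimp_bot_of_nzd (hnzd2 l a₀ ha₀l b hb) hFa₀] at hle
          exact le_bot_iff.mp hle
        have hnb : (C.cjoin c d).1 ≠ fun _ => (⊥ : L) := fun h =>
          hjb (C.eq_botC_of hjc h)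
        exact C.mem_Kblock_of_supported hacc hdec hjc hsupp hnb
    · -- comparability closure
      intro k hk c hcc hcmp hcnot
      have hkt : k ≠ topC := fun h => hk.2 (h ▸ Set.mem_insert _ _)
      have hkb : k ≠ botC := fun h => hk.2 (h ▸ Set.mem_insert_of_mem _ rfl)
      have hct : c ≠ topC := fun h => hcnot (h ▸ Set.mem_insert _ _)
      have hcb : c ≠ botC := fun h => hcnot (h ▸ Set.mem_insert_of_mem _ rfl)
      have hks := C.Kblock_supported hn2 hdec hk.1 hkt hkb
      have hknb : k.1 ≠ fun _ => (⊥ : L) := fun h => hkb (C.eq_botC_of hks.1 h)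
      have hb₀ : ∃ b₀, k.1 b₀ ≠ ⊥ := by
        by_contra h
        push_neg at h
        exact hknb (funext h)
      obtain ⟨b₀, h0⟩ := hb₀
      have hb₀l : b₀ ∈ Bfam l := by
        by_contra h
        exact h0 (hks.2 b₀ h)
      have hcnb : c.1 ≠ fun _ => (⊥ : L) := fun h => hcb (C.eq_botC_of hcc h)
      rcases hcmp with hle | hle
      · -- k ≤ c
        have hc0 : c.1 b₀ ≠ ⊥ := fun h =>
          h0 (le_bot_iff.mp (h ▸ hle b₀))
        have hsupp := C.support_unique hdec hcc hct hb₀l hc0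
        exact C.mem_Kblock_of_supported hacc hdec hcc hsupp hcnb
      · -- c ≤ k
        have hsupp : ∀ b ∉ Bfam l, c.1 b = ⊥ := fun b hb =>
          le_bot_iff.mp ((hle b).trans (hks.2 b hb).le)
        exact C.mem_Kblock_of_supported hacc hdec hcc hsupp hcnb
  · -- pairwise independence
    intro l m hlm c hc
    by_cases hct : c = topC
    · exact hct ▸ Set.mem_insert _ _
    by_cases hcb : c = botC
    · exact hcb ▸ Set.mem_insert_of_mem _ rfl
    have hcsl := C.Kblock_supported hn2 hdec hc.1 hct hcb
    have hcsm := C.Kblock_supported hn2 hdec hc.2 hct hcb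
    have hcnb : c.1 ≠ fun _ => (⊥ : L) := fun h => hcb (C.eq_botC_of hcsl.1 h)
    have hb₀ : ∃ b₀, c.1 b₀ ≠ ⊥ := by
      by_contra h
      push_neg at h
      exact hcnb (funext h)
    obtain ⟨b₀, h0⟩ := hb₀
    have hb₀l : b₀ ∈ Bfam l := by
      by_contra h; exact h0 (hcsl.2 b₀ h)
    have hb₀m : b₀ ∈ Bfam m := by
      by_contra h; exact h0 (hcsm.2 b₀ h)
    exact absurd hb₀m (Set.disjoint_left.mp (hBdisj l m hlm) hb₀l)
  · -- union
    ext c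
    constructor
    · intro hc
      obtain ⟨l, hl⟩ := Set.mem_iUnion.mp hc
      exact hKsub l hl
    · intro hc
      by_cases hct : c = topC
      · exact Set.mem_iUnion.mpr ⟨hΛ.some, hct ▸ htopK hΛ.some⟩
      by_cases hcb : c = botC
      · exact Set.mem_iUnion.mpr ⟨hΛ.some, hcb ▸ hbotK hΛ.some⟩
      obtain ⟨l, _, hmem⟩ := hconc_mem c hc hct hcb
      exact Set.mem_iUnion.mpr ⟨l, hmem⟩
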